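/- arXiv:1205.4781 — 2 statements merged into one kernel-verified Lean document; each statement's English description precedes it below -/
import Mathlib

section
/- Let X₁, X₂, X₃ be mutually independent finitely-valued random variables, let S = h(X₂, X₃) for a deterministic function h, let S' be obtained from S through a memoryless channel p(s'|s) (so (X₁,X₂,X₃) — S — S' is a Markov chain), and let Y = f(X₁, S') with f injective in each argument. Then I(X₁, X₂, X₃; Y) − I(S; S') = I(X₁; Y). -/
open scoped Classical
open Finset

noncomputable section

/-- Probability that a random variable `X` takes value `x`, under pmf `p` on `Ω`. -/
def dist' {Ω 𝒳 : Type*} [Fintype Ω] (p : Ω → ℝ) (X : Ω → 𝒳) (x : 𝒳) : ℝ :=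
  ∑ ω, if X ω = x then p ω else 0

/-- Shannon entropy of `X`. -/
def ent {Ω 𝒳 : Type*} [Fintype Ω] [Fintype 𝒳] (p : Ω → ℝ) (X : Ω → 𝒳) : ℝ :=
  -∑ x, dist' p X x * Real.log (dist' p X x)

/-- Conditional entropy `H(X | Y)`. -/
def condEnt {Ω 𝒳 𝒴 : Type*} [Fintype Ω] [Fintype 𝒳] [Fintype 𝒴]
    (p : Ω → ℝ) (X : Ω → 𝒳) (Y : Ω → 𝒴) : ℝ :=
  ent p (fun ω => (X ω, Y ω)) - ent p Y

/-- Mutual information `I(X; Y)`. -/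
def mi {Ω 𝒳 𝒴 : Type*} [Fintype Ω] [Fintype 𝒳] [Fintype 𝒴]
    (p : Ω → ℝ) (X : Ω → 𝒳) (Y : Ω → 𝒴) : ℝ :=
  ent p X + ent p Y - ent p (fun ω => (X ω, Y ω))

/-- Conditional mutual information `I(X; Y | Z)`. -/
def cmi {Ω 𝒳 𝒴 𝒵 : Type*} [Fintype Ω] [Fintype 𝒳] [Fintype 𝒴] [Fintype 𝒵]
    (p : Ω → ℝ) (X : Ω → 𝒳) (Y : Ω → 𝒴) (Z : Ω → 𝒵) : ℝ :=
  condEnt p X Z + condEnt p Y Z - condEnt p (fun ω => (X ω, Y ω)) Z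

/-- `p` is a probability mass function. -/
def IsPMF {Ω : Type*} [Fintype Ω] (p : Ω → ℝ) : Prop :=
  (∀ ω, 0 ≤ p ω) ∧ ∑ ω, p ω = 1

/-- Independence of two random variables. -/
def IndepRV {Ω 𝒳 𝒴 : Type*} [Fintype Ω] (p : Ω → ℝ) (X : Ω → 𝒳) (Y : Ω → 𝒴) : Prop :=
  ∀ x y, dist' p (fun ω => (X ω, Y ω)) (x, y) = dist' p X x * dist' p Y y

/-- Conditional independence of `X` and `Y` given `Z`. -/
def CondIndepRV {Ω 𝒳 𝒴 𝒵 : Type*} [Fintype Ω] (p : Ω → ℝ)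
    (X : Ω → 𝒳) (Y : Ω → 𝒴) (Z : Ω → 𝒵) : Prop :=
  ∀ x y z, dist' p (fun ω => (X ω, Y ω, Z ω)) (x, y, z) * dist' p Z z
    = dist' p (fun ω => (X ω, Z ω)) (x, z) * dist' p (fun ω => (Y ω, Z ω)) (y, z)

/-- Mutual independence of three random variables. -/
def MutIndep3 {Ω 𝒳 𝒴 𝒵 : Type*} [Fintype Ω] (p : Ω → ℝ)
    (X : Ω → 𝒳) (Y : Ω → 𝒴) (Z : Ω → 𝒵) : Prop :=
  ∀ x y z, dist' p (fun ω => (X ω, Y ω, Z ω)) (x, y, z)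
    = dist' p X x * dist' p Y y * dist' p Z z

/-- `f` is injective in each of its two arguments. -/
def InjEach {𝒳 𝒮 𝒴 : Type*} (f : 𝒳 → 𝒮 → 𝒴) : Prop :=
  (∀ s, Function.Injective fun x => f x s) ∧ ∀ x, Function.Injective (f x)

/-- Conditional pmf `p(x | y)` induced by the joint law of `(X, Y)`. -/
def cdist {Ω 𝒳 𝒴 : Type*} [Fintype Ω] (p : Ω → ℝ) (X : Ω → 𝒳) (Y : Ω → 𝒴)
    (x : 𝒳) (y : 𝒴) : ℝ :=
  dist' p (fun ω => (X ω, Y ω)) (x, y) / dist' p Y y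

/-- Robust (ε-) typicality of a sequence `z` with respect to a pmf `q`. -/
def Typ {𝒵 : Type*} [Fintype 𝒵] (q : 𝒵 → ℝ) (ε : ℝ) {n : ℕ} (z : Fin n → 𝒵) : Prop :=
  ∀ a, |((univ.filter fun i => z i = a).card : ℝ) / n - q a| ≤ ε * q a

end


set_option linter.unusedSectionVars false
set_option maxHeartbeats 1000000

noncomputable section Helpers

section L
variable {Ω 𝒜 ℬ 𝒞 𝒵 𝒱 𝒲 : Type*} [Fintype Ω] [Fintype 𝒜] [Fintype ℬ] [Fintype 𝒞]
  [Fintype 𝒵] [Fintype 𝒱] [Fintype 𝒲] (p : Ω → ℝ)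

lemma dist'_nonneg (hp : ∀ ω, 0 ≤ p ω) (X : Ω → 𝒜) (x : 𝒜) : 0 ≤ dist' p X x := by
  refine Finset.sum_nonneg fun ω _ => ?_
  split <;> simp [hp ω]

lemma sum_dist' (X : Ω → 𝒜) : ∑ x, dist' p X x = ∑ ω, p ω := by
  unfold dist'
  rw [Finset.sum_comm]
  exact Finset.sum_congr rfl fun ω _ => by simp

lemma dist'_le (hp : ∀ ω, 0 ≤ p ω) (Z : Ω → 𝒵) (k : 𝒵 → 𝒲) (z : 𝒵) :
    dist' p Z z ≤ dist' p (fun ω => k (Z ω)) (k z) := by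
  refine Finset.sum_le_sum fun ω _ => ?_
  by_cases h : Z ω = z
  · simp [h]
  · simp [h]; split <;> simp [hp ω]

lemma exists_of_dist'_ne (X : Ω → 𝒜) (x : 𝒜) (h : dist' p X x ≠ 0) : ∃ ω, X ω = x := by
  by_contra hc
  push_neg at hc
  exact h (by simp [dist', hc])

lemma dist'_congr_of_inv {X : Ω → 𝒜} {Y : Ω → ℬ} {u : 𝒜 → ℬ} {v : ℬ → 𝒜}
    (hu : ∀ ω, Y ω = u (X ω)) (hv : ∀ ω, X ω = v (Y ω)) {x : 𝒜} (ω₀ : Ω) (hω₀ : X ω₀ = x) :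
    dist' p Y (u x) = dist' p X x := by
  refine Finset.sum_congr rfl fun ω _ => ?_
  have hiff : Y ω = u x ↔ X ω = x := by
    constructor
    · intro hy
      have : X ω = v (u x) := by rw [hv ω, hy]
      rw [this, ← hω₀, ← hu ω₀, ← hv ω₀, hω₀]
    · intro hx; rw [hu ω, hx]
  simp only [hiff]

lemma ent_congr {X : Ω → 𝒜} {Y : Ω → ℬ} (u : 𝒜 → ℬ) (v : ℬ → 𝒜)
    (hu : ∀ ω, Y ω = u (X ω)) (hv : ∀ ω, X ω = v (Y ω)) : ent p X = ent p Y := by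
  unfold ent
  congr 1
  rw [← Finset.sum_filter_ne_zero (univ) (f := fun x => dist' p X x * Real.log (dist' p X x)),
      ← Finset.sum_filter_ne_zero (univ) (f := fun y => dist' p Y y * Real.log (dist' p Y y))]
  refine Finset.sum_nbij' (fun x => u x) (fun y => v y) ?_ ?_ ?_ ?_ ?_
  · intro x hx
    simp only [mem_filter, mem_univ, true_and] at hx ⊢
    have hne : dist' p X x ≠ 0 := fun h => hx (by rw [h]; ring)
    obtain ⟨ω₀, hω₀⟩ := exists_of_dist'_ne p X x hne
    rw [dist'_congr_of_inv p hu hv ω₀ hω₀]; exact hx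
  · intro y hy
    simp only [mem_filter, mem_univ, true_and] at hy ⊢
    have hne : dist' p Y y ≠ 0 := fun h => hy (by rw [h]; ring)
    obtain ⟨ω₀, hω₀⟩ := exists_of_dist'_ne p Y y hne
    rw [dist'_congr_of_inv p hv hu ω₀ hω₀]; exact hy
  · intro x hx
    simp only [mem_filter, mem_univ, true_and] at hx
    have hne : dist' p X x ≠ 0 := fun h => hx (by rw [h]; ring)
    obtain ⟨ω₀, hω₀⟩ := exists_of_dist'_ne p X x hne
    show v (u x) = x
    rw [← hω₀, ← hu ω₀, ← hv ω₀]
  · intro y hy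
    simp only [mem_filter, mem_univ, true_and] at hy
    have hne : dist' p Y y ≠ 0 := fun h => hy (by rw [h]; ring)
    obtain ⟨ω₀, hω₀⟩ := exists_of_dist'_ne p Y y hne
    show u (v y) = y
    rw [← hω₀, ← hv ω₀, ← hu ω₀]
  · intro x hx
    simp only [mem_filter, mem_univ, true_and] at hx
    have hne : dist' p X x ≠ 0 := fun h => hx (by rw [h]; ring)
    obtain ⟨ω₀, hω₀⟩ := exists_of_dist'_ne p X x hne
    rw [dist'_congr_of_inv p hu hv ω₀ hω₀]

lemma marg_fst (U : Ω → 𝒜) (V : Ω → ℬ) (u : 𝒜) :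
    ∑ v, dist' p (fun ω => (U ω, V ω)) (u, v) = dist' p U u := by
  unfold dist'
  rw [Finset.sum_comm]
  exact Finset.sum_congr rfl fun ω _ => by simp [Prod.ext_iff, ite_and]

lemma marg_snd (U : Ω → 𝒜) (V : Ω → ℬ) (v : ℬ) :
    ∑ u, dist' p (fun ω => (U ω, V ω)) (u, v) = dist' p V v := by
  unfold dist'
  rw [Finset.sum_comm]
  exact Finset.sum_congr rfl fun ω _ => by simp [Prod.ext_iff, ite_and]

lemma marg3_2 (A : Ω → 𝒜) (B : Ω → ℬ) (Z : Ω → 𝒵) (a : 𝒜) (z : 𝒵) :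
    ∑ b, dist' p (fun ω => (A ω, B ω, Z ω)) (a, b, z)
      = dist' p (fun ω => (A ω, Z ω)) (a, z) := by
  unfold dist'
  rw [Finset.sum_comm]
  exact Finset.sum_congr rfl fun ω _ => by simp [Prod.ext_iff, ite_and]

lemma marg3_1 (A : Ω → 𝒜) (B : Ω → ℬ) (Z : Ω → 𝒵) (b : ℬ) (z : 𝒵) :
    ∑ a, dist' p (fun ω => (A ω, B ω, Z ω)) (a, b, z)
      = dist' p (fun ω => (B ω, Z ω)) (b, z) := by
  unfold dist'
  rw [Finset.sum_comm]
  exact Finset.sum_congr rfl fun ω _ => by simp [Prod.ext_iff, ite_and]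

lemma marg3_3 (A : Ω → 𝒜) (B : Ω → ℬ) (Z : Ω → 𝒵) (a : 𝒜) (b : ℬ) :
    ∑ z, dist' p (fun ω => (A ω, B ω, Z ω)) (a, b, z)
      = dist' p (fun ω => (A ω, B ω)) (a, b) := by
  unfold dist'
  rw [Finset.sum_comm]
  exact Finset.sum_congr rfl fun ω _ => by simp [Prod.ext_iff, ite_and]

lemma push_all (V : Ω → 𝒱) (k : 𝒱 → 𝒲) (w : 𝒲) :
    dist' p (fun ω => k (V ω)) w = ∑ v, if k v = w then dist' p V v else 0 := by
  simp only [dist']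
  have e : ∀ (c : Prop) [Decidable c] (g : Ω → ℝ),
      (if c then (∑ ω, g ω) else 0) = ∑ ω, if c then g ω else 0 := by
    intro c _ g; split <;> simp
  simp only [e]
  rw [Finset.sum_comm]
  refine Finset.sum_congr rfl fun ω _ => ?_
  rw [Finset.sum_eq_single (V ω)]
  · simp
  · intro b _ hb
    split
    · exact if_neg fun h => hb h.symm
    · rfl
  · intro h; exact absurd (mem_univ _) h

lemma push_snd (U : Ω → 𝒜) (V : Ω → 𝒱) (k : 𝒱 → 𝒲) (u : 𝒜) (w : 𝒲) :
    dist' p (fun ω => (U ω, k (V ω))) (u, w)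
      = ∑ v, if k v = w then dist' p (fun ω => (U ω, V ω)) (u, v) else 0 := by
  simp only [dist']
  have e : ∀ (c : Prop) [Decidable c] (g : Ω → ℝ),
      (if c then (∑ ω, g ω) else 0) = ∑ ω, if c then g ω else 0 := by
    intro c _ g; split <;> simp
  simp only [e]
  rw [Finset.sum_comm]
  refine Finset.sum_congr rfl fun ω _ => ?_
  rw [Finset.sum_eq_single (V ω)]
  · split_ifs <;> simp_all [Prod.ext_iff]
  · intro b _ hb
    split
    · exact if_neg fun h => hb ((Prod.ext_iff.1 h).2).symm
    · rfl
  · intro h; exact absurd (mem_univ _) h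

lemma marg4 (X₁ : Ω → 𝒜) (X₂ : Ω → ℬ) (X₃ : Ω → 𝒞) (T : Ω → 𝒲) (x₁ : 𝒜) (t : 𝒲) :
    ∑ x₂, ∑ x₃, dist' p (fun ω => ((X₁ ω, X₂ ω, X₃ ω), T ω)) ((x₁, x₂, x₃), t)
      = dist' p (fun ω => (X₁ ω, T ω)) (x₁, t) := by
  simp only [dist']
  have e3 : ∀ (F : ℬ → 𝒞 → Ω → ℝ), (∑ x₂, ∑ x₃, ∑ ω, F x₂ x₃ ω)
      = ∑ ω, ∑ x₂, ∑ x₃, F x₂ x₃ ω := by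
    intro F
    calc (∑ x₂, ∑ x₃, ∑ ω, F x₂ x₃ ω) = ∑ x₂, ∑ ω, ∑ x₃, F x₂ x₃ ω :=
          Finset.sum_congr rfl fun _ _ => Finset.sum_comm
      _ = _ := Finset.sum_comm
  rw [e3]
  refine Finset.sum_congr rfl fun ω _ => ?_
  simp [Prod.ext_iff, ite_and]

lemma ent_add_of_indep (hp : IsPMF p) (A : Ω → 𝒜) (B : Ω → ℬ)
    (h : ∀ a b, dist' p (fun ω => (A ω, B ω)) (a, b) = dist' p A a * dist' p B b) :
    ent p (fun ω => (A ω, B ω)) = ent p A + ent p B := by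
  have hA : ∑ a, dist' p A a = 1 := by rw [sum_dist']; exact hp.2
  have hB : ∑ b, dist' p B b = 1 := by rw [sum_dist']; exact hp.2
  unfold ent
  rw [Fintype.sum_prod_type]
  have key : ∀ a b, dist' p (fun ω => (A ω, B ω)) (a, b)
      * Real.log (dist' p (fun ω => (A ω, B ω)) (a, b))
      = dist' p A a * dist' p B b * Real.log (dist' p A a)
        + dist' p A a * dist' p B b * Real.log (dist' p B b) := by
    intro a b
    rw [h a b]
    by_cases ha : dist' p A a = 0
    · simp [ha]
    by_cases hb : dist' p B b = 0
    · simp [hb]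
    rw [Real.log_mul ha hb]; ring
  have e1 : ∀ a, ∑ b, dist' p A a * dist' p B b * Real.log (dist' p A a)
      = dist' p A a * Real.log (dist' p A a) := by
    intro a
    have e : ∀ b, dist' p A a * dist' p B b * Real.log (dist' p A a)
        = (dist' p A a * Real.log (dist' p A a)) * dist' p B b := fun b => by ring
    rw [Finset.sum_congr rfl fun b _ => e b, ← Finset.mul_sum, hB, mul_one]
  have e2 : ∑ a, ∑ b, dist' p A a * dist' p B b * Real.log (dist' p B b)
      = ∑ b, dist' p B b * Real.log (dist' p B b) := by
    rw [Finset.sum_comm]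
    refine Finset.sum_congr rfl fun b _ => ?_
    have e : ∀ a, dist' p A a * dist' p B b * Real.log (dist' p B b)
        = (dist' p B b * Real.log (dist' p B b)) * dist' p A a := fun a => by ring
    rw [Finset.sum_congr rfl fun a _ => e a, ← Finset.mul_sum, hA, mul_one]
  calc -∑ a, ∑ b, dist' p (fun ω => (A ω, B ω)) (a, b)
        * Real.log (dist' p (fun ω => (A ω, B ω)) (a, b))
      = -∑ a, ∑ b, (dist' p A a * dist' p B b * Real.log (dist' p A a)
        + dist' p A a * dist' p B b * Real.log (dist' p B b)) := by
        congr 1; exact Finset.sum_congr rfl fun a _ => Finset.sum_congr rfl fun b _ => key a b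
    _ = -((∑ a, ∑ b, dist' p A a * dist' p B b * Real.log (dist' p A a))
        + (∑ a, ∑ b, dist' p A a * dist' p B b * Real.log (dist' p B b))) := by
        simp only [Finset.sum_add_distrib]
    _ = _ := by
        rw [e2, Finset.sum_congr rfl fun a _ => e1 a]; ring

lemma ent_condIndep (hp : IsPMF p) (A : Ω → 𝒜) (B : Ω → ℬ) (Z : Ω → 𝒵)
    (h : CondIndepRV p A B Z) :
    ent p (fun ω => (A ω, B ω, Z ω))
      = ent p (fun ω => (A ω, Z ω)) + ent p (fun ω => (B ω, Z ω)) - ent p Z := by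
  set j := dist' p (fun ω => (A ω, B ω, Z ω)) with hj
  set q1 := dist' p (fun ω => (A ω, Z ω)) with hq1
  set q2 := dist' p (fun ω => (B ω, Z ω)) with hq2
  set q0 := dist' p Z with hq0
  have hjnn : ∀ t, 0 ≤ j t := fun t => dist'_nonneg p hp.1 _ t
  have hm1 : ∀ a z, ∑ b, j (a, b, z) = q1 (a, z) := fun a z => marg3_2 p A B Z a z
  have hm2 : ∀ b z, ∑ a, j (a, b, z) = q2 (b, z) := fun b z => marg3_1 p A B Z b z
  have hm0 : ∀ z, ∑ a, q1 (a, z) = q0 z := fun z => marg_snd p A Z z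
  have key : ∀ a b z, j (a, b, z) * Real.log (j (a, b, z))
      = j (a, b, z) * Real.log (q1 (a, z)) + j (a, b, z) * Real.log (q2 (b, z))
        - j (a, b, z) * Real.log (q0 z) := by
    intro a b z
    by_cases hz : j (a, b, z) = 0
    · simp [hz]
    have hjpos : 0 < j (a, b, z) := lt_of_le_of_ne (hjnn _) (Ne.symm hz)
    have h1 : 0 < q1 (a, z) := by
      rw [← hm1 a z]
      exact lt_of_lt_of_le hjpos (Finset.single_le_sum (fun b' _ => hjnn (a, b', z)) (mem_univ b))
    have h2 : 0 < q2 (b, z) := by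
      rw [← hm2 b z]
      exact lt_of_lt_of_le hjpos (Finset.single_le_sum (fun a' _ => hjnn (a', b, z)) (mem_univ a))
    have h0 : 0 < q0 z := by
      rw [← hm0 z]
      exact lt_of_lt_of_le h1 (Finset.single_le_sum (f := fun a' => q1 (a', z))
        (fun a' _ => dist'_nonneg p hp.1 _ _) (mem_univ a))
    have hrel : j (a, b, z) = q1 (a, z) * q2 (b, z) / q0 z := by
      field_simp
      exact h a b z
    rw [hrel, Real.log_div (by positivity) (ne_of_gt h0), Real.log_mul (ne_of_gt h1) (ne_of_gt h2)]
    ring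
  unfold ent
  simp only [Fintype.sum_prod_type]
  have expand : ∑ a, ∑ b, ∑ z, j (a, b, z) * Real.log (j (a, b, z))
      = (∑ a, ∑ b, ∑ z, j (a, b, z) * Real.log (q1 (a, z)))
        + (∑ a, ∑ b, ∑ z, j (a, b, z) * Real.log (q2 (b, z)))
        - (∑ a, ∑ b, ∑ z, j (a, b, z) * Real.log (q0 z)) := by
    calc ∑ a, ∑ b, ∑ z, j (a, b, z) * Real.log (j (a, b, z))
        = ∑ a, ∑ b, ∑ z, (j (a, b, z) * Real.log (q1 (a, z))
          + j (a, b, z) * Real.log (q2 (b, z)) - j (a, b, z) * Real.log (q0 z)) := by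
          exact Finset.sum_congr rfl fun a _ => Finset.sum_congr rfl fun b _ =>
            Finset.sum_congr rfl fun z _ => key a b z
      _ = _ := by simp only [Finset.sum_add_distrib, Finset.sum_sub_distrib]
  have T1 : ∑ a, ∑ b, ∑ z, j (a, b, z) * Real.log (q1 (a, z))
      = ∑ a, ∑ z, q1 (a, z) * Real.log (q1 (a, z)) := by
    refine Finset.sum_congr rfl fun a _ => ?_
    rw [Finset.sum_comm]
    refine Finset.sum_congr rfl fun z _ => ?_
    rw [← Finset.sum_mul, hm1]
  have T2 : ∑ a, ∑ b, ∑ z, j (a, b, z) * Real.log (q2 (b, z))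
      = ∑ b, ∑ z, q2 (b, z) * Real.log (q2 (b, z)) := by
    rw [Finset.sum_comm]
    refine Finset.sum_congr rfl fun b _ => ?_
    rw [Finset.sum_comm]
    refine Finset.sum_congr rfl fun z _ => ?_
    rw [← Finset.sum_mul, hm2]
  have T3 : ∑ a, ∑ b, ∑ z, j (a, b, z) * Real.log (q0 z)
      = ∑ z, q0 z * Real.log (q0 z) := by
    have step : ∀ a, ∑ b, ∑ z, j (a, b, z) * Real.log (q0 z)
        = ∑ z, (∑ b, j (a, b, z)) * Real.log (q0 z) := by
      intro a
      rw [Finset.sum_comm]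
      exact Finset.sum_congr rfl fun z _ => by rw [← Finset.sum_mul]
    rw [Finset.sum_congr rfl fun a _ => step a, Finset.sum_comm]
    refine Finset.sum_congr rfl fun z _ => ?_
    calc ∑ a, (∑ b, j (a, b, z)) * Real.log (q0 z)
        = (∑ a, ∑ b, j (a, b, z)) * Real.log (q0 z) := by rw [← Finset.sum_mul]
      _ = q0 z * Real.log (q0 z) := by
          rw [Finset.sum_congr rfl fun a _ => hm1 a z, hm0]
  rw [expand, T1, T2, T3]
  ring

end L

end Helpers

/-- `X₁,X₂,X₃` independent, `S = h(X₂,X₃)`, `(X₁,X₂,X₃) → S → S'` Markov,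
`Y = f(X₁,S')` with `f` injective in each argument.  Then
`I(X₁,X₂,X₃; Y) − I(S;S') = I(X₁;Y)`. -/
theorem stmt3 {Ω 𝒳₁ 𝒳₂ 𝒳₃ 𝒮 𝒮' 𝒴 : Type*} [Fintype Ω] [Fintype 𝒳₁] [Fintype 𝒳₂]
    [Fintype 𝒳₃] [Fintype 𝒮] [Fintype 𝒮'] [Fintype 𝒴]
    (p : Ω → ℝ) (hp : IsPMF p) (X₁ : Ω → 𝒳₁) (X₂ : Ω → 𝒳₂) (X₃ : Ω → 𝒳₃)
    (h : 𝒳₂ → 𝒳₃ → 𝒮) (S' : Ω → 𝒮') (f : 𝒳₁ → 𝒮' → 𝒴)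
    (hind : MutIndep3 p X₁ X₂ X₃)
    (hMarkov : CondIndepRV p (fun ω => (X₁ ω, X₂ ω, X₃ ω)) S'
      (fun ω => h (X₂ ω) (X₃ ω)))
    (hf : InjEach f) :
    mi p (fun ω => (X₁ ω, X₂ ω, X₃ ω)) (fun ω => f (X₁ ω) (S' ω))
      - mi p (fun ω => h (X₂ ω) (X₃ ω)) S'
      = mi p X₁ (fun ω => f (X₁ ω) (S' ω)) := by
  classical
  have hΩ : Nonempty Ω := by
    by_contra hc
    rw [not_nonempty_iff] at hc
    have := hp.2
    rw [Finset.univ_eq_empty, Finset.sum_empty] at this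
    exact zero_ne_one this
  obtain ⟨ω₀⟩ := hΩ
  haveI : Nonempty 𝒮' := ⟨S' ω₀⟩
  set g : 𝒳₁ → 𝒴 → 𝒮' := fun x y => Function.invFun (f x) y with hgdef
  have hg : ∀ x s', g x (f x s') = s' := fun x s' => Function.leftInverse_invFun (hf.2 x) s'
  have d23 : ∀ x₂ x₃, dist' p (fun ω => (X₂ ω, X₃ ω)) (x₂, x₃)
      = dist' p X₂ x₂ * dist' p X₃ x₃ := by
    intro x₂ x₃
    have hm := marg3_1 p X₁ X₂ X₃ x₂ x₃
    have e : ∀ a, dist' p X₁ a * dist' p X₂ x₂ * dist' p X₃ x₃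
        = (dist' p X₂ x₂ * dist' p X₃ x₃) * dist' p X₁ a := fun a => by ring
    rw [← hm, Finset.sum_congr rfl fun a _ => (hind a x₂ x₃).trans (e a),
      ← Finset.mul_sum, sum_dist', hp.2, mul_one]
  have hIndep1S : ∀ x₁ s, dist' p (fun ω => (X₁ ω, h (X₂ ω) (X₃ ω))) (x₁, s)
      = dist' p X₁ x₁ * dist' p (fun ω => h (X₂ ω) (X₃ ω)) s := by
    intro x₁ s
    have h1 : dist' p (fun ω => (X₁ ω, h (X₂ ω) (X₃ ω))) (x₁, s)
        = ∑ v : 𝒳₂ × 𝒳₃, if h v.1 v.2 = s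
            then dist' p (fun ω => (X₁ ω, X₂ ω, X₃ ω)) (x₁, v.1, v.2) else 0 :=
      push_snd p X₁ (fun ω => (X₂ ω, X₃ ω)) (fun v => h v.1 v.2) x₁ s
    have h2 : dist' p (fun ω => h (X₂ ω) (X₃ ω)) s
        = ∑ v : 𝒳₂ × 𝒳₃, if h v.1 v.2 = s
            then dist' p (fun ω => (X₂ ω, X₃ ω)) (v.1, v.2) else 0 :=
      push_all p (fun ω => (X₂ ω, X₃ ω)) (fun v => h v.1 v.2) s
    rw [h1, h2, Finset.mul_sum]
    refine Finset.sum_congr rfl fun v _ => ?_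
    split
    · rw [hind x₁ v.1 v.2, d23 v.1 v.2]; ring
    · ring
  have hM1 : ∀ x₁ s' s,
      dist' p (fun ω => (X₁ ω, S' ω, h (X₂ ω) (X₃ ω))) (x₁, s', s)
        * dist' p (fun ω => h (X₂ ω) (X₃ ω)) s
      = dist' p (fun ω => (X₁ ω, h (X₂ ω) (X₃ ω))) (x₁, s)
        * dist' p (fun ω => (S' ω, h (X₂ ω) (X₃ ω))) (s', s) := by
    intro x₁ s' s
    have h4 : ∑ x₂, ∑ x₃,
        dist' p (fun ω => ((X₁ ω, X₂ ω, X₃ ω), S' ω, h (X₂ ω) (X₃ ω))) ((x₁, x₂, x₃), (s', s))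
        = dist' p (fun ω => (X₁ ω, S' ω, h (X₂ ω) (X₃ ω))) (x₁, (s', s)) :=
      marg4 p X₁ X₂ X₃ (fun ω => (S' ω, h (X₂ ω) (X₃ ω))) x₁ (s', s)
    have h5 : ∑ x₂, ∑ x₃,
        dist' p (fun ω => ((X₁ ω, X₂ ω, X₃ ω), h (X₂ ω) (X₃ ω))) ((x₁, x₂, x₃), s)
        = dist' p (fun ω => (X₁ ω, h (X₂ ω) (X₃ ω))) (x₁, s) :=
      marg4 p X₁ X₂ X₃ (fun ω => h (X₂ ω) (X₃ ω)) x₁ s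
    rw [← h4, ← h5, Finset.sum_mul, Finset.sum_mul]
    refine Finset.sum_congr rfl fun x₂ _ => ?_
    rw [Finset.sum_mul, Finset.sum_mul]
    refine Finset.sum_congr rfl fun x₃ _ => ?_
    exact hMarkov (x₁, x₂, x₃) s' s
  have hkey : ∀ x₁ s' s,
      dist' p (fun ω => (X₁ ω, S' ω, h (X₂ ω) (X₃ ω))) (x₁, s', s)
      = dist' p X₁ x₁ * dist' p (fun ω => (S' ω, h (X₂ ω) (X₃ ω))) (s', s) := by
    intro x₁ s' s
    by_cases hs : dist' p (fun ω => h (X₂ ω) (X₃ ω)) s = 0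
    · have hle1 : dist' p (fun ω => (X₁ ω, S' ω, h (X₂ ω) (X₃ ω))) (x₁, s', s)
          ≤ dist' p (fun ω => h (X₂ ω) (X₃ ω)) s :=
        dist'_le p hp.1 (fun ω => (X₁ ω, S' ω, h (X₂ ω) (X₃ ω))) (fun t => t.2.2) (x₁, s', s)
      have hle2 : dist' p (fun ω => (S' ω, h (X₂ ω) (X₃ ω))) (s', s)
          ≤ dist' p (fun ω => h (X₂ ω) (X₃ ω)) s :=
        dist'_le p hp.1 (fun ω => (S' ω, h (X₂ ω) (X₃ ω))) (fun t => t.2) (s', s)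
      have hz1 : dist' p (fun ω => (X₁ ω, S' ω, h (X₂ ω) (X₃ ω))) (x₁, s', s) = 0 :=
        le_antisymm (hs ▸ hle1) (dist'_nonneg p hp.1 _ _)
      have hz2 : dist' p (fun ω => (S' ω, h (X₂ ω) (X₃ ω))) (s', s) = 0 :=
        le_antisymm (hs ▸ hle2) (dist'_nonneg p hp.1 _ _)
      rw [hz1, hz2]; ring
    · have e := hM1 x₁ s' s
      rw [hIndep1S x₁ s] at e
      apply mul_right_cancel₀ hs
      rw [e]; ring
  have hIndep1S' : ∀ x₁ s', dist' p (fun ω => (X₁ ω, S' ω)) (x₁, s')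
      = dist' p X₁ x₁ * dist' p S' s' := by
    intro x₁ s'
    have hL := marg3_3 p X₁ S' (fun ω => h (X₂ ω) (X₃ ω)) x₁ s'
    have hR := marg_fst p S' (fun ω => h (X₂ ω) (X₃ ω)) s'
    rw [← hL, ← hR, Finset.mul_sum]
    exact Finset.sum_congr rfl fun s _ => hkey x₁ s' s
  have E1 : ent p (fun ω => ((X₁ ω, X₂ ω, X₃ ω), S' ω))
      = ent p (fun ω => ((X₁ ω, X₂ ω, X₃ ω), f (X₁ ω) (S' ω))) :=
    ent_congr p (fun t => (t.1, f t.1.1 t.2)) (fun t => (t.1, g t.1.1 t.2))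
      (fun ω => rfl) (fun ω => by
        show _ = ((X₁ ω, X₂ ω, X₃ ω), g (X₁ ω) (f (X₁ ω) (S' ω)))
        rw [hg])
  have E2 : ent p (fun ω => (X₁ ω, S' ω))
      = ent p (fun ω => (X₁ ω, f (X₁ ω) (S' ω))) :=
    ent_congr p (fun t => (t.1, f t.1 t.2)) (fun t => (t.1, g t.1 t.2))
      (fun ω => rfl) (fun ω => by
        show _ = (X₁ ω, g (X₁ ω) (f (X₁ ω) (S' ω)))
        rw [hg])
  have E3 : ent p (fun ω => (X₁ ω, X₂ ω, X₃ ω))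
      = ent p (fun ω => ((X₁ ω, X₂ ω, X₃ ω), h (X₂ ω) (X₃ ω))) :=
    ent_congr p (fun x => (x, h x.2.1 x.2.2)) Prod.fst (fun ω => rfl) (fun ω => rfl)
  have E4 : ent p (fun ω => ((X₁ ω, X₂ ω, X₃ ω), S' ω))
      = ent p (fun ω => ((X₁ ω, X₂ ω, X₃ ω), S' ω, h (X₂ ω) (X₃ ω))) :=
    ent_congr p (fun t => (t.1, t.2, h t.1.2.1 t.1.2.2)) (fun t => (t.1, t.2.1))
      (fun ω => rfl) (fun ω => rfl)
  have E5 : ent p (fun ω => (h (X₂ ω) (X₃ ω), S' ω))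
      = ent p (fun ω => (S' ω, h (X₂ ω) (X₃ ω))) :=
    ent_congr p Prod.swap Prod.swap (fun ω => rfl) (fun ω => rfl)
  have E6 : ent p (fun ω => ((X₁ ω, X₂ ω, X₃ ω), S' ω, h (X₂ ω) (X₃ ω)))
      = ent p (fun ω => ((X₁ ω, X₂ ω, X₃ ω), h (X₂ ω) (X₃ ω)))
        + ent p (fun ω => (S' ω, h (X₂ ω) (X₃ ω)))
        - ent p (fun ω => h (X₂ ω) (X₃ ω)) :=
    ent_condIndep p hp (fun ω => (X₁ ω, X₂ ω, X₃ ω)) S' (fun ω => h (X₂ ω) (X₃ ω)) hMarkov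
  have E7 : ent p (fun ω => (X₁ ω, S' ω)) = ent p X₁ + ent p S' :=
    ent_add_of_indep p hp X₁ S' hIndep1S'
  simp only [mi]
  linarith [E1, E2, E3, E4, E5, E6, E7]
end

section
/- Chain rule identity establishing the equivalence between conditions (7) and (12) of the paper: under the Markov chains c₂₁ⱼ — c₂₁ⱼ' — Y₁ and c₃₁ₖ — c₃₁ₖ' — Y₁ (where the primed variables determine the unprimed), I(X₁,X₂,X₃; Y₁ | c₁ᵢ, c₂₁ⱼ, c₃₁ₖ, Q) − I(S₁; S₁' | c₂₁ⱼ', c₃₁ₖ', Q) = I(X₁, c₂₁ⱼ', c₃₁ₖ'; Y₁ | c₁ᵢ, c₂₁ⱼ, c₃₁ₖ, Q), given that H(Y₁ | X₁,X₂,X₃, c₁ᵢ, c₂₁ⱼ, c₃₁ₖ, Q) = H(S₁'|S₁,Q), H(S₁'|c₂₁ⱼ', c₃₁ₖ', Q) = H(Y₁|X₁, c₁ᵢ, c₂₁ⱼ', c₃₁ₖ', Q), and H(S₁'|S₁, c₂₁ⱼ', c₃₁ₖ', Q) = H(S₁'|S₁,Q). -/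
open scoped Classical
open Finset

noncomputable section

/-- Mutual conditional independence of three random variables given `Q`. -/
def CondMutIndep3 {Ω 𝒳 𝒴 𝒵 𝒬 : Type*} [Fintype Ω] (p : Ω → ℝ)
    (X : Ω → 𝒳) (Y : Ω → 𝒴) (Z : Ω → 𝒵) (Q : Ω → 𝒬) : Prop :=
  ∀ x y z q, dist' p (fun ω => (X ω, Y ω, Z ω, Q ω)) (x, y, z, q)
      * dist' p Q q * dist' p Q q
    = dist' p (fun ω => (X ω, Q ω)) (x, q) * dist' p (fun ω => (Y ω, Q ω)) (y, q)
      * dist' p (fun ω => (Z ω, Q ω)) (z, q)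

end

lemma ent_comp_inj {Ω 𝒳 𝒴 : Type*} [Fintype Ω] [Fintype 𝒳] [Fintype 𝒴]
    (p : Ω → ℝ) (X : Ω → 𝒳) (Y : Ω → 𝒴) (g : 𝒳 → 𝒴)
    (hg : Function.Injective g) (hXY : ∀ ω, Y ω = g (X ω)) :
    ent p Y = ent p X := by
  have hY : Y = fun ω => g (X ω) := funext hXY
  subst hY
  unfold ent
  congr 1
  have hd : ∀ x, dist' p (fun ω => g (X ω)) (g x) = dist' p X x := by
    intro x
    unfold dist'
    refine Finset.sum_congr rfl fun ω _ => ?_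
    simp [hg.eq_iff]
  have h0 : ∀ y ∉ Finset.univ.image g, dist' p (fun ω => g (X ω)) y = 0 := by
    intro y hy
    refine Finset.sum_eq_zero fun ω _ => ?_
    rw [if_neg]
    intro h
    exact hy (h ▸ Finset.mem_image_of_mem g (Finset.mem_univ _))
  calc ∑ y, dist' p (fun ω => g (X ω)) y * Real.log (dist' p (fun ω => g (X ω)) y)
      = ∑ y ∈ Finset.univ.image g,
          dist' p (fun ω => g (X ω)) y * Real.log (dist' p (fun ω => g (X ω)) y) := by
        refine (Finset.sum_subset (Finset.subset_univ _) fun y _ hy => ?_).symm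
        rw [h0 y hy]; simp
    _ = ∑ x, dist' p (fun ω => g (X ω)) (g x) * Real.log (dist' p (fun ω => g (X ω)) (g x)) :=
        Finset.sum_image (fun a _ b _ h => hg h)
    _ = ∑ x, dist' p X x * Real.log (dist' p X x) := by
        refine Finset.sum_congr rfl fun x _ => ?_; rw [hd]

/-- Chain-rule identity behind the equivalence of conditions (7) and (12):
under the Markov chains `c₂₁ⱼ — c₂₁ⱼ' — Y₁` and `c₃₁ₖ — c₃₁ₖ' — Y₁` and the
listed entropy identities,
`I(X₁,X₂,X₃;Y₁|c₁ᵢ,c₂₁ⱼ,c₃₁ₖ,Q) − I(S₁;S₁'|c₂₁ⱼ',c₃₁ₖ',Q)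
  = I(X₁,c₂₁ⱼ',c₃₁ₖ';Y₁|c₁ᵢ,c₂₁ⱼ,c₃₁ₖ,Q)`. -/
theorem stmt15 {Ω 𝒬 𝒳₁ 𝒳₂ 𝒳₃ 𝒞₁ 𝒞₂ 𝒞₂' 𝒞₃ 𝒞₃' 𝒮 𝒮' 𝒢₁ 𝒴₁ : Type*}
    [Fintype Ω] [Fintype 𝒬] [Fintype 𝒳₁] [Fintype 𝒳₂] [Fintype 𝒳₃]
    [Fintype 𝒞₁] [Fintype 𝒞₂] [Fintype 𝒞₂'] [Fintype 𝒞₃] [Fintype 𝒞₃']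
    [Fintype 𝒮] [Fintype 𝒮'] [Fintype 𝒢₁] [Fintype 𝒴₁]
    (p : Ω → ℝ) (hp : IsPMF p)
    (Q : Ω → 𝒬) (X₁ : Ω → 𝒳₁) (X₂ : Ω → 𝒳₂) (X₃ : Ω → 𝒳₃)
    (c₁ : Ω → 𝒞₁) (c₂ : Ω → 𝒞₂) (c₂' : Ω → 𝒞₂') (c₃ : Ω → 𝒞₃) (c₃' : Ω → 𝒞₃')
    (S₁ : Ω → 𝒮) (S₁' : Ω → 𝒮') (g11 : 𝒳₁ → 𝒢₁) (f₁ : 𝒢₁ → 𝒮' → 𝒴₁)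
    (hXQ : CondMutIndep3 p X₁ X₂ X₃ Q)
    (hc₁ : ∃ φ : 𝒳₁ × 𝒬 → 𝒞₁, ∀ ω, c₁ ω = φ (X₁ ω, Q ω))
    (hc₂' : ∃ φ : 𝒳₂ → 𝒞₂', ∀ ω, c₂' ω = φ (X₂ ω))
    (hc₂ : ∃ φ : 𝒞₂' → 𝒞₂, ∀ ω, c₂ ω = φ (c₂' ω))
    (hc₃' : ∃ φ : 𝒳₃ → 𝒞₃', ∀ ω, c₃' ω = φ (X₃ ω))
    (hc₃ : ∃ φ : 𝒞₃' → 𝒞₃, ∀ ω, c₃ ω = φ (c₃' ω))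
    (hS₁ : ∃ φ : 𝒳₂ × 𝒳₃ → 𝒮, ∀ ω, S₁ ω = φ (X₂ ω, X₃ ω))
    (hMarkov : CondIndepRV p (fun ω => (X₁ ω, X₂ ω, X₃ ω)) S₁'
      (fun ω => (S₁ ω, Q ω)))
    (hY : InjEach f₁)
    (h1 : condEnt p (fun ω => f₁ (g11 (X₁ ω)) (S₁' ω))
        (fun ω => (X₁ ω, X₂ ω, X₃ ω, c₁ ω, c₂ ω, c₃ ω, Q ω))
      = condEnt p S₁' (fun ω => (S₁ ω, Q ω)))
    (h2 : condEnt p S₁' (fun ω => (c₂' ω, c₃' ω, Q ω))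
      = condEnt p (fun ω => f₁ (g11 (X₁ ω)) (S₁' ω))
          (fun ω => (X₁ ω, c₁ ω, c₂' ω, c₃' ω, Q ω)))
    (h3 : condEnt p S₁' (fun ω => (S₁ ω, c₂' ω, c₃' ω, Q ω))
      = condEnt p S₁' (fun ω => (S₁ ω, Q ω))) :
    cmi p (fun ω => (X₁ ω, X₂ ω, X₃ ω)) (fun ω => f₁ (g11 (X₁ ω)) (S₁' ω))
        (fun ω => (c₁ ω, c₂ ω, c₃ ω, Q ω))
      - cmi p S₁ S₁' (fun ω => (c₂' ω, c₃' ω, Q ω))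
    = cmi p (fun ω => (X₁ ω, c₂' ω, c₃' ω)) (fun ω => f₁ (g11 (X₁ ω)) (S₁' ω))
        (fun ω => (c₁ ω, c₂ ω, c₃ ω, Q ω)) := by
  obtain ⟨φ₂, hφ₂⟩ := hc₂
  obtain ⟨φ₃, hφ₃⟩ := hc₃
  have ea : ent p (fun ω => ((X₁ ω, X₂ ω, X₃ ω), c₁ ω, c₂ ω, c₃ ω, Q ω))
      = ent p (fun ω => (X₁ ω, X₂ ω, X₃ ω, c₁ ω, c₂ ω, c₃ ω, Q ω)) := by
    refine ent_comp_inj p _ _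
      (fun t : 𝒳₁ × 𝒳₂ × 𝒳₃ × 𝒞₁ × 𝒞₂ × 𝒞₃ × 𝒬 =>
        ((t.1, t.2.1, t.2.2.1), t.2.2.2)) ?_ fun ω => rfl
    intro a b h; simp only [Prod.ext_iff] at h ⊢; tauto
  have eb : ent p (fun ω => (((X₁ ω, X₂ ω, X₃ ω), f₁ (g11 (X₁ ω)) (S₁' ω)),
        c₁ ω, c₂ ω, c₃ ω, Q ω))
      = ent p (fun ω => (f₁ (g11 (X₁ ω)) (S₁' ω),
        X₁ ω, X₂ ω, X₃ ω, c₁ ω, c₂ ω, c₃ ω, Q ω)) := by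
    refine ent_comp_inj p _ _
      (fun t : 𝒴₁ × 𝒳₁ × 𝒳₂ × 𝒳₃ × 𝒞₁ × 𝒞₂ × 𝒞₃ × 𝒬 =>
        (((t.2.1, t.2.2.1, t.2.2.2.1), t.1), t.2.2.2.2)) ?_ fun ω => rfl
    intro a b h; simp only [Prod.ext_iff] at h ⊢; tauto
  have ec : ent p (fun ω => ((S₁ ω, S₁' ω), c₂' ω, c₃' ω, Q ω))
      = ent p (fun ω => (S₁' ω, S₁ ω, c₂' ω, c₃' ω, Q ω)) := by
    refine ent_comp_inj p _ _
      (fun t : 𝒮' × 𝒮 × 𝒞₂' × 𝒞₃' × 𝒬 => ((t.2.1, t.1), t.2.2)) ?_ fun ω => rfl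
    intro a b h; simp only [Prod.ext_iff] at h ⊢; tauto
  have ed : ent p (fun ω => ((X₁ ω, c₂' ω, c₃' ω), c₁ ω, c₂ ω, c₃ ω, Q ω))
      = ent p (fun ω => (X₁ ω, c₁ ω, c₂' ω, c₃' ω, Q ω)) := by
    refine ent_comp_inj p _ _
      (fun t : 𝒳₁ × 𝒞₁ × 𝒞₂' × 𝒞₃' × 𝒬 =>
        ((t.1, t.2.2.1, t.2.2.2.1), t.2.1, φ₂ t.2.2.1, φ₃ t.2.2.2.1, t.2.2.2.2))
      ?_ fun ω => by simp [hφ₂ ω, hφ₃ ω]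
    intro a b h; simp only [Prod.ext_iff] at h ⊢; tauto
  have ee : ent p (fun ω => (((X₁ ω, c₂' ω, c₃' ω), f₁ (g11 (X₁ ω)) (S₁' ω)),
        c₁ ω, c₂ ω, c₃ ω, Q ω))
      = ent p (fun ω => (f₁ (g11 (X₁ ω)) (S₁' ω),
        X₁ ω, c₁ ω, c₂' ω, c₃' ω, Q ω)) := by
    refine ent_comp_inj p _ _
      (fun t : 𝒴₁ × 𝒳₁ × 𝒞₁ × 𝒞₂' × 𝒞₃' × 𝒬 =>
        (((t.2.1, t.2.2.2.1, t.2.2.2.2.1), t.1),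
          t.2.2.1, φ₂ t.2.2.2.1, φ₃ t.2.2.2.2.1, t.2.2.2.2.2))
      ?_ fun ω => by simp [hφ₂ ω, hφ₃ ω]
    intro a b h; simp only [Prod.ext_iff] at h ⊢; tauto
  simp only [cmi, condEnt] at h1 h2 h3 ⊢
  linarith [h1, h2, h3, ea, eb, ec, ed, ee]
end
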